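/- arXiv:1705.08102 — 4 statements merged into one kernel-verified Lean document; each statement's English description precedes it below -/
import Mathlib

section
/- For every real number $a$ with $1/2 \leq a \leq 1$ and every real $\sigma$ with $0 < \sigma < 1$, the Hurwitz zeta-function satisfies $\zeta(\sigma, a) \neq 0$. -/
open HurwitzZeta

/-!
For `0 < Re s < 1`, continuation from `Re s > 1` (identity theorem on a connected region avoiding
the pole) gives `ζ(s, a) = ∑ₙ (cₙ ^ (-s) - ∫_{cₙ}^{cₙ + 1} x ^ (-s) dx) - a ^ (1 - s) / (1 - s)`
with `cₙ = n + a`, the series converging because its terms are `O(cₙ ^ (-Re s - 1))`.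
For real `σ`, convexity of `x ^ (-σ)` gives `c ^ (-σ) ≤ ∫_{c - 1/2}^{c + 1/2} x ^ (-σ) dx`, which
bounds the terms with `n ≥ 1` by a telescoping series; altogether
`ζ(σ, a) ≤ a ^ (-σ) - (a + 1/2) ^ (1 - σ) / (1 - σ)`. This is negative for `a ≥ 1/2`, since
`(1 - σ) a ^ (-σ) ≤ (1 - σ) 2 ^ σ ≤ 1 - σ ^ 2 < 1` by Bernoulli's inequality.
-/

open Complex Set Filter Topology

lemma two_mul_rpow_neg_le_add {σ : ℝ} (hσ : 0 ≤ σ) {x y c : ℝ} (hx : 0 < x) (hy : 0 < y)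
    (hxy : x + y = 2 * c) : 2 * c ^ (-σ) ≤ x ^ (-σ) + y ^ (-σ) := by
  -- AM-GM twice: `x ^ (-σ) + y ^ (-σ) ≥ 2 (x y) ^ (-σ / 2) ≥ 2 c ^ (-σ)`, as `x y ≤ c ^ 2`.
  have hc : 0 < c := by linarith
  have hxyc : x * y ≤ c ^ 2 := by nlinarith [sq_nonneg (x - y)]
  have hsq : ∀ z : ℝ, 0 < z → z ^ (-σ) = (z ^ (-σ / 2)) ^ 2 := fun z hz => by
    rw [← Real.rpow_natCast, ← Real.rpow_mul hz.le]; norm_num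
  have hgm : c ^ (-σ) ≤ x ^ (-σ / 2) * y ^ (-σ / 2) :=
    calc c ^ (-σ) = (c ^ 2) ^ (-σ / 2) := by
          rw [← Real.rpow_natCast, ← Real.rpow_mul hc.le]; ring_nf
      _ ≤ (x * y) ^ (-σ / 2) := Real.rpow_le_rpow_of_nonpos (by positivity) hxyc (by linarith)
      _ = x ^ (-σ / 2) * y ^ (-σ / 2) := Real.mul_rpow hx.le hy.le
  rw [hsq x hx, hsq y hy]
  nlinarith [sq_nonneg (x ^ (-σ / 2) - y ^ (-σ / 2))]

lemma mul_rpow_neg_le_integral {σ h c : ℝ} (hσ : 0 ≤ σ) (hh : 0 ≤ h) (hhc : h < c) :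
    2 * h * c ^ (-σ) ≤ ∫ x in c - h..c + h, x ^ (-σ) := by
  -- Average the integrand with its reflection in `c` and use midpoint convexity pointwise.
  have hpos : ∀ x ∈ Icc (c - h) (c + h), 0 < x ∧ 0 < 2 * c - x := fun x hx =>
    ⟨by linarith [hx.1], by linarith [hx.2]⟩
  have hint : IntervalIntegrable (fun x : ℝ => x ^ (-σ)) MeasureTheory.volume (c - h) (c + h) :=
    intervalIntegral.intervalIntegrable_rpow
      (Or.inr (notMem_uIcc_of_lt (by linarith) (by linarith)))
  have hrefl : ∫ x in c - h..c + h, (2 * c - x) ^ (-σ) = ∫ x in c - h..c + h, x ^ (-σ) := by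
    rw [intervalIntegral.integral_comp_sub_left (fun x : ℝ => x ^ (-σ))]
    congr 1 <;> ring
  have hint' : IntervalIntegrable (fun x : ℝ => (2 * c - x) ^ (-σ)) MeasureTheory.volume
      (c - h) (c + h) := by
    convert (hint.comp_sub_left (2 * c)).symm using 1 <;> ring
  have hmono : ∫ _ in c - h..c + h, 2 * c ^ (-σ) ≤
      ∫ x in c - h..c + h, (x ^ (-σ) + (2 * c - x) ^ (-σ)) :=
    intervalIntegral.integral_mono_on (by linarith) intervalIntegrable_const (hint.add hint')
      fun x hx => two_mul_rpow_neg_le_add hσ (hpos x hx).1 (hpos x hx).2 (by ring)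
  rw [intervalIntegral.integral_add hint hint', hrefl, intervalIntegral.integral_const,
    smul_eq_mul] at hmono
  linarith

lemma tsum_le_of_le_sub_succ {f w : ℕ → ℝ} (hf : Summable f) (hfw : ∀ n, f n ≤ w n - w (n + 1))
    (hw : ∀ n, 0 ≤ w n) : ∑' n, f n ≤ w 0 :=
  le_of_tendsto' hf.hasSum.tendsto_sum_nat fun n =>
    calc ∑ i ∈ Finset.range n, f i ≤ ∑ i ∈ Finset.range n, (w i - w (i + 1)) :=
          Finset.sum_le_sum fun i _ => hfw i
      _ = w 0 - w n := Finset.sum_range_sub' w n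
      _ ≤ w 0 := by linarith [hw n]

lemma summable_nat_add_rpow {b p : ℝ} (hb : 0 < b) (hp : p < -1) :
    Summable (fun n : ℕ => ((n : ℝ) + b) ^ p) := by
  refine ((Real.summable_one_div_nat_add_rpow b (-p)).2 (by linarith)).congr fun n => ?_
  have hnb : 0 < (n : ℝ) + b := by positivity
  rw [abs_of_pos hnb, Real.rpow_neg hnb.le, one_div, inv_inv]

lemma norm_ofReal_cpow_neg_sub_le {c t : ℝ} (hc : 0 < c) (hct : c ≤ t) {s : ℂ}
    (hs : -1 ≤ s.re) :
    ‖(t : ℂ) ^ (-s) - (c : ℂ) ^ (-s)‖ ≤ ‖s‖ * c ^ (-s.re - 1) * (t - c) := by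
  have hderiv : ∀ x ∈ Icc c t, HasDerivWithinAt (fun y : ℝ => (y : ℂ) ^ (-s))
      (-s * (x : ℂ) ^ (-s - 1)) (Icc c t) x := fun x hx =>
    (((hasDerivAt_id (x : ℂ)).cpow_const
      (ofReal_mem_slitPlane.2 (hc.trans_le hx.1))).comp_ofReal.hasDerivWithinAt).congr_deriv
      (by simp)
  refine norm_image_sub_le_of_norm_deriv_le_segment' hderiv (fun x hx => ?_) t ⟨hct, le_rfl⟩
  have hx0 : 0 < x := hc.trans_le hx.1
  rw [norm_mul, norm_neg, norm_cpow_eq_rpow_re_of_pos hx0]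
  gcongr
  exact Real.rpow_le_rpow_of_nonpos hc hx.1 (by simp; linarith)

/-- `c ^ (-s) - ∫ x in c..c + 1, x ^ (-s)`, with the integral evaluated. -/
noncomputable def cpowSubIntegral (c : ℝ) (s : ℂ) : ℂ :=
  (c : ℂ) ^ (-s) - (((c : ℂ) + 1) ^ (1 - s) - (c : ℂ) ^ (1 - s)) / (1 - s)

noncomputable def rpowSubIntegral (c σ : ℝ) : ℝ :=
  c ^ (-σ) - ((c + 1) ^ (1 - σ) - c ^ (1 - σ)) / (1 - σ)

lemma ofReal_rpowSubIntegral {c : ℝ} (hc : 0 ≤ c) (σ : ℝ) :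
    (rpowSubIntegral c σ : ℂ) = cpowSubIntegral c σ := by
  have hc1 : 0 ≤ c + 1 := by linarith
  simp only [rpowSubIntegral, cpowSubIntegral]
  push_cast [ofReal_cpow hc, ofReal_cpow hc1]
  ring_nf

lemma norm_cpowSubIntegral_le {c : ℝ} (hc : 0 < c) {s : ℂ} (hs : -1 ≤ s.re) (hs1 : s ≠ 1) :
    ‖cpowSubIntegral c s‖ ≤ ‖s‖ * c ^ (-s.re - 1) := by
  set ψ : ℝ → ℂ := fun t => (t : ℂ) ^ (-s + 1) / (-s + 1) - t * (c : ℂ) ^ (-s)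
  have hψ : ∀ x ∈ Icc c (c + 1),
      HasDerivWithinAt ψ ((x : ℂ) ^ (-s) - (c : ℂ) ^ (-s)) (Icc c (c + 1)) x := by
    intro x hx
    have hs' : -s ≠ -1 := by simpa using hs1
    exact (((hasDerivAt_ofReal_cpow_const' (hc.trans_le hx.1).ne' hs').sub
      ((hasDerivAt_id x).ofReal_comp.mul_const _)).hasDerivWithinAt).congr_deriv (by simp)
  have hbound := norm_image_sub_le_of_norm_deriv_le_segment' hψ (C := ‖s‖ * c ^ (-s.re - 1))
    (fun x hx => (norm_ofReal_cpow_neg_sub_le hc hx.1 hs).trans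
      (mul_le_of_le_one_right (by positivity) (by linarith [hx.2]))) (c + 1) ⟨by linarith, le_rfl⟩
  have hψE : cpowSubIntegral c s = -(ψ (c + 1) - ψ c) := by
    simp only [cpowSubIntegral, ψ]; push_cast; ring_nf
  rw [hψE, norm_neg]
  simpa using hbound

lemma differentiableAt_cpowSubIntegral {c : ℝ} (hc : 0 < c) {s : ℂ} (hs : s ≠ 1) :
    DifferentiableAt ℂ (cpowSubIntegral c) s := by
  have hc0 : (c : ℂ) ≠ 0 := ofReal_ne_zero.2 hc.ne'
  have hc1 : (c : ℂ) + 1 ≠ 0 := by exact_mod_cast (by linarith : c + 1 ≠ 0)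
  have h1s : (1 : ℂ) - s ≠ 0 := sub_ne_zero.2 (Ne.symm hs)
  unfold cpowSubIntegral
  fun_prop (disch := first | exact Or.inl hc0 | exact Or.inl hc1 | assumption)

lemma summable_cpowSubIntegral {b : ℝ} (hb : 0 < b) {s : ℂ} (hs : 0 < s.re) (hs1 : s ≠ 1) :
    Summable (fun n : ℕ => cpowSubIntegral (n + b) s) :=
  .of_norm_bounded ((summable_nat_add_rpow hb (by linarith)).mul_left ‖s‖)
    fun _ => norm_cpowSubIntegral_le (by positivity) (by linarith) hs1

lemma differentiableAt_tsum_cpowSubIntegral {b : ℝ} (hb : 1 ≤ b) {s₀ : ℂ} (hs₀ : 0 < s₀.re)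
    (hs₀1 : s₀ ≠ 1) :
    DifferentiableAt ℂ (fun s => ∑' n : ℕ, cpowSubIntegral (n + b) s) s₀ := by
  set V : Set ℂ := {s | s₀.re / 2 < s.re ∧ ‖s‖ < ‖s₀‖ + 1 ∧ s ≠ 1}
  have hV : IsOpen V := (isOpen_lt continuous_const continuous_re).and
    ((isOpen_lt continuous_norm continuous_const).and isOpen_ne)
  have hs₀V : s₀ ∈ V := ⟨by linarith, by linarith, hs₀1⟩
  have hmaj := (summable_nat_add_rpow (b := b) (p := -(s₀.re / 2) - 1) (by linarith)
    (by linarith)).mul_left (‖s₀‖ + 1)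
  refine (differentiableOn_tsum_of_summable_norm hmaj
    (fun n s hs => (differentiableAt_cpowSubIntegral (by positivity) hs.2.2).differentiableWithinAt)
    hV fun n s hs => ?_).differentiableAt (hV.mem_nhds hs₀V)
  have hnb : 1 ≤ (n : ℝ) + b := by have := n.cast_nonneg (α := ℝ); linarith
  calc ‖cpowSubIntegral (n + b) s‖ ≤ ‖s‖ * ((n : ℝ) + b) ^ (-s.re - 1) :=
        norm_cpowSubIntegral_le (by linarith) (by linarith [hs.1]) hs.2.2
    _ ≤ (‖s₀‖ + 1) * ((n : ℝ) + b) ^ (-(s₀.re / 2) - 1) := by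
        gcongr
        · exact hs.2.1.le
        · exact hs.1.le

lemma hasSum_cpowSubIntegral_of_one_lt_re {a : ℝ} (ha : 0 < a) (ha1 : a ≤ 1) {s : ℂ}
    (hs : 1 < s.re) :
    HasSum (fun n : ℕ => cpowSubIntegral (n + a) s)
      (hurwitzZeta a s + (a : ℂ) ^ (1 - s) / (1 - s)) := by
  have hs1 : s ≠ 1 := by rintro rfl; simp at hs
  set v : ℕ → ℂ := fun n => ((n : ℂ) + a) ^ (1 - s) / (1 - s)
  have hv : Tendsto v atTop (𝓝 0) := by
    rw [tendsto_zero_iff_norm_tendsto_zero]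
    have hnorm : ∀ n : ℕ, ‖v n‖ = ((n : ℝ) + a) ^ (-(s.re - 1)) / ‖1 - s‖ := fun n => by
      rw [norm_div, show (n : ℂ) + a = ((n + a : ℝ) : ℂ) by push_cast; rfl,
        norm_cpow_eq_rpow_re_of_pos (by positivity)]
      simp
    simp_rw [hnorm]
    have := ((tendsto_rpow_neg_atTop (by linarith : 0 < s.re - 1)).comp
      (tendsto_atTop_add_const_right _ a tendsto_natCast_atTop_atTop)).div_const ‖1 - s‖
    rw [zero_div] at this
    exact this
  have hζ := hasSum_hurwitzZeta_of_one_lt_re ⟨ha.le, ha1⟩ hs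
  have hstep : ∀ n : ℕ, 1 / ((n : ℂ) + a) ^ s - cpowSubIntegral (n + a) s = v (n + 1) - v n := by
    intro n
    simp only [cpowSubIntegral, v, cpow_neg, one_div]
    push_cast
    ring_nf
  have htel : HasSum (fun n : ℕ => 1 / ((n : ℂ) + a) ^ s - cpowSubIntegral (n + a) s) (-v 0) := by
    refine (hζ.summable.sub (summable_cpowSubIntegral ha (by linarith) hs1)
      ).hasSum_iff_tendsto_nat.2 ?_
    simp_rw [hstep, Finset.sum_range_sub]
    simpa using hv.sub_const (v 0)
  simpa [v, sub_sub_cancel] using hζ.sub htel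

lemma hurwitzZeta_eq_cpowSubIntegral_add_tsum_of_one_lt_re {a : ℝ} (ha : 0 < a) (ha1 : a ≤ 1)
    {s : ℂ} (hs : 1 < s.re) :
    hurwitzZeta a s = cpowSubIntegral a s + ∑' n : ℕ, cpowSubIntegral (n + (a + 1)) s
      - (a : ℂ) ^ (1 - s) / (1 - s) := by
  have h := (hasSum_nat_add_iff' 1).2 (hasSum_cpowSubIntegral_of_one_lt_re ha ha1 hs)
  simp only [Finset.range_one, Finset.sum_singleton, Nat.cast_zero, zero_add, Nat.cast_add,
    Nat.cast_one, add_right_comm _ (1 : ℝ)] at h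
  rw [(by simpa only [add_assoc] using h : HasSum _ _).tsum_eq]
  ring

lemma hurwitzZeta_eq_cpowSubIntegral_add_tsum_of_re_lt_one {a : ℝ} (ha : 0 < a) (ha1 : a ≤ 1)
    {s : ℂ} (hs : 0 < s.re) (hs1 : s.re < 1) :
    hurwitzZeta a s = cpowSubIntegral a s + ∑' n : ℕ, cpowSubIntegral (n + (a + 1)) s
      - (a : ℂ) ^ (1 - s) / (1 - s) := by
  -- The strip joined to a quadrant: connected, free of the pole, and meeting `1 < Re s`.
  set V : Set ℂ := {s | 0 < s.re} ∩ {s | s.re < 1} ∪ {s | 0 < s.re} ∩ {s | 0 < s.im}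
  have hVopen : IsOpen V :=
    ((isOpen_lt continuous_const continuous_re).inter
      (isOpen_lt continuous_re continuous_const)).union
    ((isOpen_lt continuous_const continuous_re).inter
      (isOpen_lt continuous_const continuous_im))
  have hV : IsPreconnected V :=
    ((convex_halfSpace_re_gt 0).inter (convex_halfSpace_re_lt 1)).isPreconnected.union
      (1 / 2 + I / 2) (by norm_num) (by norm_num)
      ((convex_halfSpace_re_gt 0).inter (convex_halfSpace_im_gt 0)).isPreconnected
  have hVpole : ∀ s ∈ V, 0 < s.re ∧ s ≠ 1 := by
    rintro s (⟨h0, h1⟩ | ⟨h0, h1⟩) <;> refine ⟨h0, ?_⟩ <;> rintro rfl <;> simp at h1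
  have hζ : AnalyticOnNhd ℂ (hurwitzZeta a) V :=
    DifferentiableOn.analyticOnNhd (fun s hs =>
      (differentiableAt_hurwitzZeta a (hVpole s hs).2).differentiableWithinAt) hVopen
  have hF : AnalyticOnNhd ℂ (fun s => cpowSubIntegral a s +
      ∑' n : ℕ, cpowSubIntegral (n + (a + 1)) s - (a : ℂ) ^ (1 - s) / (1 - s)) V := by
    refine DifferentiableOn.analyticOnNhd (fun s hs => ?_) hVopen
    obtain ⟨h0, h1⟩ := hVpole s hs
    have ha0 : (a : ℂ) ≠ 0 := ofReal_ne_zero.2 ha.ne'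
    have h1s : (1 : ℂ) - s ≠ 0 := sub_ne_zero.2 (Ne.symm h1)
    refine (((differentiableAt_cpowSubIntegral ha h1).add
      (differentiableAt_tsum_cpowSubIntegral (by linarith) h0 h1)).sub ?_).differentiableWithinAt
    fun_prop (disch := first | exact Or.inl ha0 | assumption)
  have hagree : hurwitzZeta a =ᶠ[𝓝 (2 + I)] fun s => cpowSubIntegral a s +
      ∑' n : ℕ, cpowSubIntegral (n + (a + 1)) s - (a : ℂ) ^ (1 - s) / (1 - s) := by
    filter_upwards [(isOpen_lt continuous_const continuous_re).mem_nhds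
      (show (1 : ℝ) < (2 + I).re by norm_num)] with s hs
    exact hurwitzZeta_eq_cpowSubIntegral_add_tsum_of_one_lt_re ha ha1 hs
  exact hζ.eqOn_of_preconnected_of_eventuallyEq hF hV (Or.inr (by norm_num)) hagree
    (Or.inl ⟨hs, hs1⟩)

lemma hurwitzZeta_eq_ofReal_rpowSubIntegral_add_tsum {a σ : ℝ} (ha : 0 < a) (ha1 : a ≤ 1)
    (hσ : 0 < σ) (hσ1 : σ < 1) :
    hurwitzZeta a σ = ((rpowSubIntegral a σ + ∑' n : ℕ, rpowSubIntegral (n + (a + 1)) σ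
      - a ^ (1 - σ) / (1 - σ) : ℝ) : ℂ) := by
  rw [hurwitzZeta_eq_cpowSubIntegral_add_tsum_of_re_lt_one (s := σ) ha ha1 (by simpa) (by simpa)]
  push_cast [ofReal_tsum, ofReal_cpow ha.le]
  rw [ofReal_rpowSubIntegral ha.le, tsum_congr fun n : ℕ =>
    ofReal_rpowSubIntegral (c := n + (a + 1)) (by positivity) σ]

lemma summable_rpowSubIntegral {b σ : ℝ} (hb : 0 < b) (hσ : 0 < σ) (hσ1 : σ ≠ 1) :
    Summable (fun n : ℕ => rpowSubIntegral (n + b) σ) := by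
  rw [← Complex.summable_ofReal]
  exact (summable_cpowSubIntegral (s := σ) hb (by simpa) (by exact_mod_cast hσ1)).congr
    fun n => (ofReal_rpowSubIntegral (by positivity) σ).symm

lemma rpowSubIntegral_le_sub {σ c : ℝ} (hσ0 : 0 ≤ σ) (hσ1 : σ < 1) (hc : 1 / 2 < c) :
    rpowSubIntegral c σ ≤ (c ^ (1 - σ) - (c - 1 / 2) ^ (1 - σ)) / (1 - σ)
      - ((c + 1) ^ (1 - σ) - (c + 1 - 1 / 2) ^ (1 - σ)) / (1 - σ) := by
  have hmid := mul_rpow_neg_le_integral hσ0 (h := 1 / 2) (by norm_num) hc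
  rw [integral_rpow (Or.inl (by linarith)), show -σ + 1 = 1 - σ by ring] at hmid
  rw [rpowSubIntegral, show c + 1 - 1 / 2 = c + 1 / 2 by ring]
  have : (c ^ (1 - σ) - (c - 1 / 2) ^ (1 - σ)) / (1 - σ)
      - ((c + 1) ^ (1 - σ) - (c + 1 / 2) ^ (1 - σ)) / (1 - σ)
      - (c ^ (-σ) - ((c + 1) ^ (1 - σ) - c ^ (1 - σ)) / (1 - σ))
      = ((c + 1 / 2) ^ (1 - σ) - (c - 1 / 2) ^ (1 - σ)) / (1 - σ) - c ^ (-σ) := by ring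
  linarith

lemma tsum_rpowSubIntegral_le {σ b : ℝ} (hσ0 : 0 < σ) (hσ1 : σ < 1) (hb : 1 / 2 < b) :
    ∑' n : ℕ, rpowSubIntegral (n + b) σ ≤ (b ^ (1 - σ) - (b - 1 / 2) ^ (1 - σ)) / (1 - σ) := by
  set w : ℕ → ℝ := fun n => (((n : ℝ) + b) ^ (1 - σ) - ((n : ℝ) + b - 1 / 2) ^ (1 - σ)) / (1 - σ)
  have hfw : ∀ n : ℕ, rpowSubIntegral (n + b) σ ≤ w n - w (n + 1) := fun n => by
    have := rpowSubIntegral_le_sub hσ0.le hσ1 (c := n + b) (by linarith [n.cast_nonneg (α := ℝ)])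
    simpa only [w, Nat.cast_succ, add_right_comm _ (1 : ℝ)] using this
  have hw : ∀ n, 0 ≤ w n := fun n => by
    have hnb : 1 / 2 < (n : ℝ) + b := by linarith [n.cast_nonneg (α := ℝ)]
    exact div_nonneg (sub_nonneg.2 (Real.rpow_le_rpow (by linarith) (by linarith) (by linarith)))
      (by linarith)
  simpa [w] using tsum_le_of_le_sub_succ (summable_rpowSubIntegral (by linarith) hσ0 hσ1.ne) hfw hw

lemma one_sub_mul_rpow_neg_lt {a σ : ℝ} (ha : 1 / 2 ≤ a) (hσ0 : 0 < σ) (hσ1 : σ < 1) :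
    (1 - σ) * a ^ (-σ) < (a + 1 / 2) ^ (1 - σ) :=
  calc (1 - σ) * a ^ (-σ) ≤ (1 - σ) * 2 ^ σ := by
        gcongr
        calc a ^ (-σ) ≤ (1 / 2) ^ (-σ) :=
              Real.rpow_le_rpow_of_nonpos (by norm_num) ha (by linarith)
          _ = 2 ^ σ := by
              rw [one_div, Real.inv_rpow zero_le_two, Real.rpow_neg zero_le_two, inv_inv]
    _ ≤ (1 - σ) * (1 + σ) := by
        gcongr
        simpa [one_add_one_eq_two] using
          rpow_one_add_le_one_add_mul_self (s := 1) (by norm_num) hσ0.le hσ1.le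
    _ < 1 := by nlinarith
    _ ≤ (a + 1 / 2) ^ (1 - σ) := Real.one_le_rpow (by linarith) (by linarith)

lemma rpowSubIntegral_add_tsum_sub_lt_zero {a σ : ℝ} (ha : 1 / 2 ≤ a) (hσ0 : 0 < σ)
    (hσ1 : σ < 1) :
    rpowSubIntegral a σ + ∑' n : ℕ, rpowSubIntegral (n + (a + 1)) σ
      - a ^ (1 - σ) / (1 - σ) < 0 := by
  have hσ1' : 0 < 1 - σ := by linarith
  have htail := tsum_rpowSubIntegral_le hσ0 hσ1 (b := a + 1) (by linarith)
  have hhead : a ^ (-σ) < (a + 1 / 2) ^ (1 - σ) / (1 - σ) := by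
    rw [lt_div_iff₀ hσ1']; linarith [one_sub_mul_rpow_neg_lt ha hσ0 hσ1]
  rw [show a + 1 - 1 / 2 = a + 1 / 2 by ring] at htail
  rw [rpowSubIntegral]
  have : ((a + 1) ^ (1 - σ) - a ^ (1 - σ)) / (1 - σ) + a ^ (1 - σ) / (1 - σ)
      = ((a + 1) ^ (1 - σ) - (a + 1 / 2) ^ (1 - σ)) / (1 - σ)
        + (a + 1 / 2) ^ (1 - σ) / (1 - σ) := by ring
  linarith

/-- **Nakamura's non-vanishing theorem.** For every real `a` with `1/2 ≤ a ≤ 1` and every real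
`σ` with `0 < σ < 1`, the Hurwitz zeta function satisfies `ζ(σ, a) ≠ 0`. -/
theorem hurwitzZeta_ne_zero_of_half_le (a σ : ℝ) (ha : 1 / 2 ≤ a) (ha' : a ≤ 1)
    (hσ : 0 < σ) (hσ' : σ < 1) :
    hurwitzZeta (a : UnitAddCircle) (σ : ℂ) ≠ 0 := by
  rw [hurwitzZeta_eq_ofReal_rpowSubIntegral_add_tsum (by linarith) ha' hσ hσ']
  exact ofReal_ne_zero.2 (rpowSubIntegral_add_tsum_sub_lt_zero ha hσ hσ').ne
end

section
/- For every real $a$ with $0 < a < 1/2$, there exists $x_0 > 0$ such that $H(a, x_0) = 0$, $H(a,x) > 0$ for all $0 < x < x_0$, and $H(a,x) < 0$ for all $x > x_0$. -/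
/-!
Multiplying the numerator of `H a x` by `e^{(a-1)x}` gives `G a x = x - e^{ax} + e^{(a-1)x}`,
which has the sign of `H a x` for `x > 0`. Here `G 0 = G' 0 = 0` and
`G'' x = e^{(a-1)x} ((1-a)^2 - a^2 e^x)` changes sign once, from `+` to `-`, at a positive point
because `a < 1 - a`. A function vanishing at `0` whose derivative changes sign once in this way
increases and then decreases, so once it becomes negative it changes sign exactly once itself.
Applying this to `G'` and then to `G` (both are eventually negative) gives the claim.
-/

/-- The kernel `H(a,x) = e^{(1-a)x}/(e^x - 1) - 1/x`. -/
noncomputable def H (a x : ℝ) : ℝ := Real.exp ((1 - a) * x) / (Real.exp x - 1) - 1 / x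

open Real Set

def SignChangeAt (f : ℝ → ℝ) (x₀ : ℝ) : Prop :=
  0 < x₀ ∧ f x₀ = 0 ∧ (∀ x, 0 < x → x < x₀ → 0 < f x) ∧ ∀ x, x₀ < x → f x < 0

theorem SignChangeAt.of_eq_mul {f g w : ℝ → ℝ} {x₀ : ℝ} (hf : SignChangeAt f x₀)
    (hw : ∀ x, 0 < x → 0 < w x) (hg : ∀ x, 0 < x → g x = f x * w x) : SignChangeAt g x₀ := by
  obtain ⟨hx₀, hzero, hpos, hneg⟩ := hf
  refine ⟨hx₀, by rw [hg x₀ hx₀, hzero, zero_mul], fun x hx hxx₀ => ?_, fun x hx => ?_⟩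
  · rw [hg x hx]
    exact mul_pos (hpos x hx hxx₀) (hw x hx)
  · rw [hg x (hx₀.trans hx)]
    exact mul_neg_of_neg_of_pos (hneg x hx) (hw x (hx₀.trans hx))

theorem signChangeAt_sub_mul_exp {K L : ℝ} (hL : 0 < L) (hLK : L < K) :
    SignChangeAt (fun x => K - L * exp x) (log (K / L)) := by
  have hKL : 0 < K / L := div_pos (hL.trans hLK) hL
  refine ⟨log_pos ((one_lt_div hL).2 hLK), ?_, fun x _ hx => ?_, fun x hx => ?_⟩
  · simp only [exp_log hKL]
    field_simp
    ring
  · rw [lt_log_iff_exp_lt hKL, lt_div_iff₀' hL] at hx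
    linarith
  · rw [log_lt_iff_lt_exp hKL, div_lt_iff₀' hL] at hx
    linarith

theorem signChangeAt_of_strictMonoOn_of_strictAntiOn {f : ℝ → ℝ} {c M : ℝ} (hf : Continuous f)
    (h0 : f 0 = 0) (hc : 0 < c) (hmono : StrictMonoOn f (Icc 0 c))
    (hanti : StrictAntiOn f (Ici c)) (hM : 0 ≤ M) (hfM : f M < 0) : ∃ x₀, SignChangeAt f x₀ := by
  have hpos : ∀ x, 0 < x → x ≤ c → 0 < f x := fun x hx hxc =>
    h0 ▸ hmono ⟨le_rfl, hc.le⟩ ⟨hx.le, hxc⟩ hx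
  have hcM : c < M := by
    by_contra! hMc
    rcases hM.eq_or_lt with rfl | hM
    · exact hfM.ne h0
    · exact (hpos M hM hMc).not_gt hfM
  obtain ⟨x₀, ⟨hcx₀, -⟩, hfx₀⟩ :=
    intermediate_value_Icc' hcM.le hf.continuousOn ⟨hfM.le, (hpos c hc le_rfl).le⟩
  replace hcx₀ : c < x₀ := hcx₀.lt_of_ne (by rintro rfl; exact (hpos c hc le_rfl).ne' hfx₀)
  refine ⟨x₀, hc.trans hcx₀, hfx₀, fun x hx hxx₀ => ?_, fun x hx => ?_⟩
  · rcases le_or_gt x c with hxc | hxc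
    · exact hpos x hx hxc
    · exact hfx₀ ▸ hanti hxc.le hcx₀.le hxx₀
  · exact hfx₀ ▸ hanti hcx₀.le (hcx₀.le.trans hx.le) hx

theorem SignChangeAt.of_hasDerivAt {f f' : ℝ → ℝ} {c M : ℝ} (hf' : SignChangeAt f' c)
    (hf : ∀ x, HasDerivAt f (f' x) x) (h0 : f 0 = 0) (hM : 0 ≤ M) (hfM : f M < 0) :
    ∃ x₀, SignChangeAt f x₀ := by
  obtain ⟨hc, -, hpos, hneg⟩ := hf'
  have hcont : Continuous f := continuous_iff_continuousAt.2 fun x => (hf x).continuousAt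
  refine signChangeAt_of_strictMonoOn_of_strictAntiOn hcont h0 hc ?_ ?_ hM hfM
  · refine strictMonoOn_of_deriv_pos (convex_Icc 0 c) hcont.continuousOn fun x hx => ?_
    rw [interior_Icc] at hx
    exact (hf x).deriv ▸ hpos x hx.1 hx.2
  · refine strictAntiOn_of_deriv_neg (convex_Ici c) hcont.continuousOn fun x hx => ?_
    rw [interior_Ici] at hx
    exact (hf x).deriv ▸ hneg x hx

noncomputable def G (a x : ℝ) : ℝ := x - exp (a * x) + exp ((a - 1) * x)

noncomputable def G' (a x : ℝ) : ℝ := 1 - a * exp (a * x) + (a - 1) * exp ((a - 1) * x)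

noncomputable def G'' (a x : ℝ) : ℝ := -(a ^ 2 * exp (a * x)) + (a - 1) ^ 2 * exp ((a - 1) * x)

theorem hasDerivAt_exp_const_mul (b x : ℝ) :
    HasDerivAt (fun y => exp (b * y)) (b * exp (b * x)) x := by
  simpa only [mul_one, mul_comm b (exp _)] using ((hasDerivAt_id' x).const_mul b).exp

theorem hasDerivAt_G (a x : ℝ) : HasDerivAt (G a) (G' a x) x :=
  (((hasDerivAt_id' x).sub (hasDerivAt_exp_const_mul a x)).add
    (hasDerivAt_exp_const_mul (a - 1) x)).congr_deriv (by simp only [G'])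

theorem hasDerivAt_G' (a x : ℝ) : HasDerivAt (G' a) (G'' a x) x :=
  (((hasDerivAt_const x 1).sub ((hasDerivAt_exp_const_mul a x).const_mul a)).add
    ((hasDerivAt_exp_const_mul (a - 1) x).const_mul (a - 1))).congr_deriv
      (by simp only [G'']; ring)

theorem G_zero (a : ℝ) : G a 0 = 0 := by simp [G]

theorem G'_zero (a : ℝ) : G' a 0 = 0 := by simp [G']

theorem G''_eq_mul (a x : ℝ) : G'' a x = ((a - 1) ^ 2 - a ^ 2 * exp x) * exp ((a - 1) * x) := by
  have : exp x * exp ((a - 1) * x) = exp (a * x) := by rw [← exp_add]; ring_nf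
  rw [G'', ← this]
  ring

theorem G'_one_div_sq_neg {a : ℝ} (ha : 0 < a) (ha1 : a ≤ 1) : G' a (1 / a ^ 2) < 0 := by
  have hexp : 1 + 1 / a ≤ exp (a * (1 / a ^ 2)) := by
    rw [show a * (1 / a ^ 2) = 1 / a by field_simp]
    linarith [add_one_le_exp (1 / a)]
  have hmul : a * (1 + 1 / a) = a + 1 := by field_simp
  have hlast : (a - 1) * exp ((a - 1) * (1 / a ^ 2)) ≤ 0 :=
    mul_nonpos_of_nonpos_of_nonneg (by linarith) (exp_pos _).le
  rw [G']
  nlinarith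

theorem G_two_div_sq_neg {a : ℝ} (ha : 0 < a) (ha1 : a ≤ 1) : G a (2 / a ^ 2) < 0 := by
  have hexp : 1 + 2 / a + 2 / a ^ 2 ≤ exp (a * (2 / a ^ 2)) := by
    have h := quadratic_le_exp_of_nonneg (x := 2 / a) (by positivity)
    rw [show a * (2 / a ^ 2) = 2 / a by field_simp]
    convert h using 2
    field_simp
  have hlast : exp ((a - 1) * (2 / a ^ 2)) ≤ 1 :=
    exp_le_one_iff.2 (mul_nonpos_of_nonpos_of_nonneg (by linarith) (by positivity))
  have : 0 < 2 / a := by positivity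
  rw [G]
  linarith

theorem H_eq_G_mul (a : ℝ) {x : ℝ} (hx : 0 < x) :
    H a x = G a x * (exp ((1 - a) * x) / (x * (exp x - 1))) := by
  have hex : exp x - 1 ≠ 0 := (sub_pos.2 (one_lt_exp_iff.2 hx)).ne'
  have e1 : exp (a * x) * exp ((1 - a) * x) = exp x := by rw [← exp_add]; ring_nf
  have e2 : exp ((a - 1) * x) * exp ((1 - a) * x) = 1 := by
    rw [← exp_add]; ring_nf; exact exp_zero
  rw [H, G, div_sub_div _ _ hex hx.ne', mul_div_assoc', mul_comm x]
  congr 1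
  linear_combination e1 - e2

/-- For `0 < a < 1/2` there exists `x₀ > 0` with `H(a,x₀) = 0`, `H(a,x) > 0` on `(0,x₀)`,
and `H(a,x) < 0` on `(x₀,∞)`. -/
theorem exists_sign_change_of_H (a : ℝ) (ha : 0 < a) (ha' : a < 1 / 2) :
    ∃ x₀ : ℝ, 0 < x₀ ∧ H a x₀ = 0 ∧
      (∀ x : ℝ, 0 < x → x < x₀ → 0 < H a x) ∧
      (∀ x : ℝ, x₀ < x → H a x < 0) := by
  have hG'' : SignChangeAt (G'' a) (log ((a - 1) ^ 2 / a ^ 2)) :=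
    (signChangeAt_sub_mul_exp (by positivity) (by nlinarith)).of_eq_mul
      (fun x _ => exp_pos _) fun x _ => G''_eq_mul a x
  obtain ⟨x₂, hG'⟩ := hG''.of_hasDerivAt (hasDerivAt_G' a) (G'_zero a) (by positivity)
    (G'_one_div_sq_neg ha (by linarith))
  obtain ⟨x₀, hG⟩ := hG'.of_hasDerivAt (hasDerivAt_G a) (G_zero a) (by positivity)
    (G_two_div_sq_neg ha (by linarith))
  refine ⟨x₀, hG.of_eq_mul (fun x hx => ?_) fun x hx => H_eq_G_mul a hx⟩
  exact div_pos (exp_pos _) (mul_pos hx (sub_pos.2 (one_lt_exp_iff.2 hx)))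
end

section
/- Let $0 < a < 1/2$ and let $x_0 > 0$ be the point such that $H(a,x) > 0$ for $0 < x < x_0$ and $H(a,x) < 0$ for $x > x_0$. Then for every $\sigma \in (0,1)$, the derivative with respect to $\sigma$ of $F(\sigma) = x_0^{-\sigma}\,\Gamma(\sigma)\,\zeta(\sigma,a)$ satisfies $F'(\sigma) = \int_0^{\infty} H(a,x) \left(\frac{x}{x_0}\right)^{\sigma} \log\left(\frac{x}{x_0}\right) \frac{dx}{x} < 0$. -/
open HurwitzZeta

/-!
For `1 < re s`, expanding `e^{(1-a)x}/(e^x - 1) = ∑ₙ e^{-(n+a)x}` and integrating termwise gives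
`Γ(s) ζ(s,a) = ∫₀^∞ (H(a,x) + 1/x) x^{s-1} dx`. Splitting the integral at `x = 1` and integrating
the term `1/x` explicitly on `(0,1]` yields an expression holomorphic on `0 < re s` away from
`s = 1`; on the strip `0 < re s < 1` the same manipulation on `(1,∞)` turns it back into
`∫₀^∞ H(a,x) x^{s-1} dx`, since `H(a,x)` is bounded near `0` and `O(1/x)` at `∞`. By the identity
theorem `Γ(s) ζ(s,a)` is this Mellin transform on the strip. Substituting `x = x₀ t` turns
`x₀^{-σ} Γ(σ) ζ(σ,a)` into the Mellin transform of `t ↦ H(a, x₀ t)`, whose derivative is the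
Mellin transform of `log t · H(a, x₀ t)`. The sign conditions make `H(a,x) log(x/x₀)` nonpositive,
and negative on `(0, x₀)`.
-/

open Set Filter Topology Asymptotics MeasureTheory Real

noncomputable def hurwitzKernel (a x : ℝ) : ℝ := exp ((1 - a) * x) / (exp x - 1)

lemma H_eq_hurwitzKernel_sub (a x : ℝ) : H a x = hurwitzKernel a x - x⁻¹ := by
  rw [H, hurwitzKernel, one_div]

lemma hurwitzKernel_eq {a x : ℝ} (hx : 0 < x) :
    hurwitzKernel a x = exp (-(a * x)) / (1 - exp (-x)) := by
  have h1 : 0 < exp x - 1 := by linarith [add_one_lt_exp hx.ne']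
  rw [hurwitzKernel, div_eq_div_iff h1.ne' (sub_pos.2 (exp_lt_one_iff.2 (neg_neg_of_pos hx))).ne',
    show (1 - a) * x = x + -(a * x) by ring, exp_add, exp_neg x]
  field_simp

lemma hurwitzKernel_pos {a x : ℝ} (hx : 0 < x) : 0 < hurwitzKernel a x :=
  div_pos (exp_pos _) (by linarith [add_one_lt_exp hx.ne'])

lemma hasSum_hurwitzKernel (a : ℝ) {x : ℝ} (hx : 0 < x) :
    HasSum (fun n : ℕ => exp (-(n + a) * x)) (hurwitzKernel a x) := by
  have h := (hasSum_geometric_of_lt_one (exp_pos (-x)).le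
    (exp_lt_one_iff.2 (neg_neg_of_pos hx))).mul_left (exp (-(a * x)))
  rw [hurwitzKernel_eq hx, div_eq_mul_inv]
  refine h.congr_fun fun n => ?_
  rw [← exp_nat_mul, ← exp_add]
  ring_nf

lemma hurwitzKernel_le {a x : ℝ} (hx : 0 < x) :
    hurwitzKernel a x ≤ exp (-(a * x)) * (1 + x⁻¹) := by
  have h1 : 0 < 1 - exp (-x) := sub_pos.2 (exp_lt_one_iff.2 (neg_neg_of_pos hx))
  have h2 : 1 ≤ (1 + x⁻¹) * (1 - exp (-x)) := by
    rw [exp_neg, ← sub_nonneg,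
      show (1 + x⁻¹) * (1 - (exp x)⁻¹) - 1 = (exp x - (x + 1)) / (x * exp x) by field_simp; ring]
    exact div_nonneg (by linarith [add_one_le_exp x]) (by positivity)
  rw [hurwitzKernel_eq hx, div_le_iff₀ h1]
  nlinarith [exp_pos (-(a * x))]

lemma neg_le_H (a : ℝ) {x : ℝ} (hx : 0 < x) : -a ≤ H a x := by
  have h1 : 0 < 1 - exp (-x) := sub_pos.2 (exp_lt_one_iff.2 (neg_neg_of_pos hx))
  have h2 : exp (-(a * x)) / x ≤ hurwitzKernel a x := by
    rw [hurwitzKernel_eq hx]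
    exact div_le_div_of_nonneg_left (exp_pos _).le h1 (by linarith [one_sub_le_exp_neg x])
  have h3 : (1 - a * x) / x ≤ exp (-(a * x)) / x :=
    div_le_div_of_nonneg_right (one_sub_le_exp_neg _) hx.le
  have h4 : (1 - a * x) / x = x⁻¹ - a := by field_simp
  rw [H_eq_hurwitzKernel_sub]
  linarith

lemma H_le_exp {a x : ℝ} (ha : 0 ≤ a) (hx : 0 < x) : H a x ≤ exp (-(a * x)) := by
  have h1 : exp (-(a * x)) ≤ 1 := exp_le_one_iff.2 (by nlinarith)
  have h2 : exp (-(a * x)) * x⁻¹ ≤ x⁻¹ := mul_le_of_le_one_left (by positivity) h1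
  rw [H_eq_hurwitzKernel_sub]
  linarith [hurwitzKernel_le (a := a) hx]

lemma abs_H_le {a x : ℝ} (ha : 0 ≤ a) (hx : 0 < x) : |H a x| ≤ 1 + a := by
  have h1 : exp (-(a * x)) ≤ 1 := exp_le_one_iff.2 (by nlinarith)
  rw [abs_le]
  constructor <;> linarith [neg_le_H a hx, H_le_exp ha hx]

lemma abs_H_le_div {a x : ℝ} (ha : 0 < a) (hx : 0 < x) : |H a x| ≤ (1 + a⁻¹) / x := by
  have h1 : exp (-(a * x)) ≤ a⁻¹ / x := by
    rw [exp_neg, div_eq_mul_inv, ← mul_inv, inv_le_inv₀ (exp_pos _) (by positivity)]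
    linarith [add_one_le_exp (a * x)]
  have h2 : -x⁻¹ < H a x := by
    rw [H_eq_hurwitzKernel_sub]; linarith [hurwitzKernel_pos (a := a) hx]
  have h3 : (1 + a⁻¹) / x = x⁻¹ + a⁻¹ / x := by ring
  rw [abs_le, h3]
  constructor <;> linarith [H_le_exp ha.le hx, inv_pos.2 hx, div_pos (inv_pos.2 ha) hx]

lemma continuousOn_hurwitzKernel (a : ℝ) : ContinuousOn (hurwitzKernel a) (Ioi 0) :=
  (continuous_exp.comp (continuous_const.mul continuous_id)).continuousOn.div
    (continuous_exp.sub continuous_const).continuousOn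
    fun x (hx : 0 < x) => by linarith [add_one_lt_exp hx.ne']

lemma continuousOn_H (a : ℝ) : ContinuousOn (H a) (Ioi 0) := by
  simp_rw [funext (H_eq_hurwitzKernel_sub a)]
  exact (continuousOn_hurwitzKernel a).sub (continuousOn_inv₀.mono fun x hx => ne_of_gt hx)

section Mellin

variable {E : Type*} [NormedAddCommGroup E]

lemma LocallyIntegrableOn.indicator_of_isLocallyClosed {f : ℝ → E} {s S : Set ℝ}
    (hf : LocallyIntegrableOn f s) (hs : IsLocallyClosed s) (hS : MeasurableSet S) :
    LocallyIntegrableOn (S.indicator f) s := by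
  rw [locallyIntegrableOn_iff hs] at hf ⊢
  exact fun k hk hkc => (hf k hk hkc).indicator hS

lemma isBigO_indicator_Ioc_atTop (f : ℝ → E) (c : ℝ) :
    (Ioc 0 1).indicator f =O[atTop] (· ^ c) := by
  refine EventuallyEq.trans_isBigO ?_ (isBigO_zero _ _)
  filter_upwards [eventually_gt_atTop 1] with t ht
  exact indicator_of_notMem (fun h => (h.2.trans_lt ht).false) f

lemma isBigO_indicator_Ioi_nhdsGT (f : ℝ → E) (c : ℝ) :
    (Ioi 1).indicator f =O[𝓝[>] 0] (· ^ c) := by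
  refine EventuallyEq.trans_isBigO ?_ (isBigO_zero _ _)
  filter_upwards [Ioo_mem_nhdsGT one_pos] with t ht
  exact indicator_of_notMem (fun h => (ht.2.trans h).false) f

lemma isBigO_nhdsGT_of_norm_le {f : ℝ → E} {C : ℝ} (h : ∀ t > 0, ‖f t‖ ≤ C) :
    f =O[𝓝[>] 0] (· ^ (-(0 : ℝ))) :=
  IsBigO.of_bound C <| by
    filter_upwards [self_mem_nhdsWithin] with t (ht : 0 < t)
    simpa using h t ht

lemma isBigO_atTop_of_norm_le {f : ℝ → E} {C : ℝ} (h : ∀ t > 0, ‖f t‖ ≤ C / t) :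
    f =O[atTop] (· ^ (-(1 : ℝ))) :=
  IsBigO.of_bound C <| by
    filter_upwards [eventually_gt_atTop 0] with t ht
    rw [rpow_neg_one, norm_inv, norm_of_nonneg ht.le, ← div_eq_mul_inv]
    exact h t ht

variable [NormedSpace ℂ E]

lemma mellin_congr_Ioi {f g : ℝ → E} (h : EqOn f g (Ioi 0)) (s : ℂ) : mellin f s = mellin g s :=
  setIntegral_congr_fun measurableSet_Ioi fun t ht => by rw [h ht]

end Mellin

lemma hasMellin_cpow_Ioi (a : ℂ) {s : ℂ} (hs : s.re + a.re < 0) :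
    HasMellin ((Ioi 1).indicator fun t => (t : ℂ) ^ a) s (-1 / (s + a)) := by
  have h : EqOn (fun t : ℝ => (t : ℂ) ^ (s - 1) • (t : ℂ) ^ a) (fun t => (t : ℂ) ^ (s + a - 1))
      (Ioi 1) := fun t (ht : 1 < t) => by
    dsimp only
    rw [smul_eq_mul, ← Complex.cpow_add _ _ (Complex.ofReal_ne_zero.2 (by positivity))]
    ring_nf
  simp_rw [HasMellin, mellin, MellinConvergent, ← indicator_smul, IntegrableOn,
    integrable_indicator_iff measurableSet_Ioi, integral_indicator measurableSet_Ioi,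
    Measure.restrict_restrict_of_subset (Ioi_subset_Ioi zero_le_one)]
  have hre : (s + a - 1).re < -1 := by simp; linarith
  constructor
  · rw [IntegrableOn, Measure.restrict_restrict_of_subset (Ioi_subset_Ioi zero_le_one)]
    exact (integrableOn_congr_fun h measurableSet_Ioi).2 (integrableOn_Ioi_cpow_of_lt hre one_pos)
  · rw [setIntegral_congr_fun measurableSet_Ioi h, integral_Ioi_cpow_of_lt hre one_pos]
    simp

section HurwitzKernelMellin

variable {a : ℝ}

lemma isBigO_indicator_Ioc_H_nhdsGT (ha : 0 ≤ a) :
    (Ioc 0 1).indicator (fun x => (H a x : ℂ)) =O[𝓝[>] 0] (· ^ (-(0 : ℝ))) :=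
  isBigO_nhdsGT_of_norm_le fun t ht => (norm_indicator_le_norm_self _ _).trans <| by
    rw [Complex.norm_real, norm_eq_abs]
    exact abs_H_le ha ht

lemma isBigO_indicator_Ioi_hurwitzKernel_atTop :
    (Ioi 1).indicator (fun x => (hurwitzKernel a x : ℂ)) =O[atTop] fun t => exp (-a * t) :=
  IsBigO.of_bound 2 <| by
    filter_upwards [eventually_gt_atTop 1] with t (ht : 1 < t)
    have ht0 : 0 < t := one_pos.trans ht
    have ht1 : t⁻¹ ≤ 1 := inv_le_one_of_one_le₀ ht.le
    rw [indicator_of_mem (show t ∈ Ioi 1 from ht), Complex.norm_real,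
      norm_of_nonneg (hurwitzKernel_pos ht0).le, norm_of_nonneg (exp_pos _).le, neg_mul]
    nlinarith [hurwitzKernel_le (a := a) ht0, exp_pos (-(a * t))]

lemma locallyIntegrableOn_indicator_H (a : ℝ) {S : Set ℝ} (hS : MeasurableSet S) :
    LocallyIntegrableOn (S.indicator fun x => (H a x : ℂ)) (Ioi 0) :=
  LocallyIntegrableOn.indicator_of_isLocallyClosed
    ((Complex.continuous_ofReal.comp_continuousOn (continuousOn_H a)).locallyIntegrableOn
      measurableSet_Ioi) isOpen_Ioi.isLocallyClosed hS

lemma locallyIntegrableOn_indicator_hurwitzKernel (a : ℝ) {S : Set ℝ} (hS : MeasurableSet S) :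
    LocallyIntegrableOn (S.indicator fun x => (hurwitzKernel a x : ℂ)) (Ioi 0) :=
  LocallyIntegrableOn.indicator_of_isLocallyClosed
    ((Complex.continuous_ofReal.comp_continuousOn
      (continuousOn_hurwitzKernel a)).locallyIntegrableOn measurableSet_Ioi)
    isOpen_Ioi.isLocallyClosed hS

lemma mellinConvergent_indicator_Ioc_H (ha : 0 ≤ a) {s : ℂ} (hs : 0 < s.re) :
    MellinConvergent ((Ioc 0 1).indicator fun x => (H a x : ℂ)) s :=
  mellinConvergent_of_isBigO_rpow (a := s.re + 1)
    (locallyIntegrableOn_indicator_H a measurableSet_Ioc)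
    (isBigO_indicator_Ioc_atTop _ _) (lt_add_one _) (isBigO_indicator_Ioc_H_nhdsGT ha) hs

lemma differentiableAt_mellin_indicator_Ioc_H (ha : 0 ≤ a) {s : ℂ} (hs : 0 < s.re) :
    DifferentiableAt ℂ (mellin ((Ioc 0 1).indicator fun x => (H a x : ℂ))) s :=
  mellin_differentiableAt_of_isBigO_rpow (a := s.re + 1)
    (locallyIntegrableOn_indicator_H a measurableSet_Ioc)
    (isBigO_indicator_Ioc_atTop _ _) (lt_add_one _) (isBigO_indicator_Ioc_H_nhdsGT ha) hs

lemma mellinConvergent_indicator_Ioi_hurwitzKernel (ha : 0 < a) (s : ℂ) :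
    MellinConvergent ((Ioi 1).indicator fun x => (hurwitzKernel a x : ℂ)) s :=
  mellinConvergent_of_isBigO_rpow_exp (b := s.re - 1) ha
    (locallyIntegrableOn_indicator_hurwitzKernel a measurableSet_Ioi)
    isBigO_indicator_Ioi_hurwitzKernel_atTop (isBigO_indicator_Ioi_nhdsGT _ _) (sub_one_lt _)

lemma differentiable_mellin_indicator_Ioi_hurwitzKernel (ha : 0 < a) :
    Differentiable ℂ (mellin ((Ioi 1).indicator fun x => (hurwitzKernel a x : ℂ))) := fun s =>
  mellin_differentiableAt_of_isBigO_rpow_exp (b := s.re - 1) ha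
    (locallyIntegrableOn_indicator_hurwitzKernel a measurableSet_Ioi)
    isBigO_indicator_Ioi_hurwitzKernel_atTop (isBigO_indicator_Ioi_nhdsGT _ _) (sub_one_lt _)

end HurwitzKernelMellin

/-- The continuation of `mellin (hurwitzKernel a)` to `0 < re s`: on `(0, 1]` the part `1 / x` of
the kernel is integrated explicitly. -/
noncomputable def hurwitzKernelMellinCont (a : ℝ) (s : ℂ) : ℂ :=
  mellin ((Ioc 0 1).indicator fun x => (H a x : ℂ)) s + 1 / (s - 1) +
    mellin ((Ioi 1).indicator fun x => (hurwitzKernel a x : ℂ)) s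

section HurwitzKernelMellinCont

variable {a : ℝ}

lemma differentiableAt_hurwitzKernelMellinCont (ha : 0 < a) {s : ℂ} (hs : 0 < s.re)
    (hs1 : s ≠ 1) : DifferentiableAt ℂ (hurwitzKernelMellinCont a) s :=
  ((differentiableAt_mellin_indicator_Ioc_H ha.le hs).add
    ((differentiableAt_const _).div (differentiableAt_id.sub_const 1) (sub_ne_zero.2 hs1))).add
    (differentiable_mellin_indicator_Ioi_hurwitzKernel ha s)

lemma mellin_hurwitzKernel_eq_hurwitzKernelMellinCont (ha : 0 < a) {s : ℂ} (hs : 1 < s.re) :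
    mellin (fun x => (hurwitzKernel a x : ℂ)) s = hurwitzKernelMellinCont a s := by
  have hP3 := hasMellin_cpow_Ioc (-1) (s := s) (by simp; linarith)
  have h1 := hasMellin_add (mellinConvergent_indicator_Ioc_H ha.le (by linarith)) hP3.1
  have h2 := hasMellin_add h1.1 (mellinConvergent_indicator_Ioi_hurwitzKernel ha s)
  have hsplit : EqOn (fun x => (hurwitzKernel a x : ℂ)) (fun t =>
      (Ioc 0 1).indicator (fun x => (H a x : ℂ)) t +
        (Ioc 0 1).indicator (fun x : ℝ => (x : ℂ) ^ (-1 : ℂ)) t +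
        (Ioi 1).indicator (fun x => (hurwitzKernel a x : ℂ)) t) (Ioi 0) := by
    intro t (ht : 0 < t)
    rcases le_or_gt t 1 with h | h
    · simp [indicator, ht, h, H_eq_hurwitzKernel_sub, Complex.cpow_neg_one]
    · simp [indicator, h, h.not_ge]
  rw [mellin_congr_Ioi hsplit, h2.2, h1.2, hP3.2, hurwitzKernelMellinCont, ← sub_eq_add_neg]

lemma mellin_H_eq_hurwitzKernelMellinCont (ha : 0 < a) {s : ℂ} (hs0 : 0 < s.re)
    (hs1 : s.re < 1) :
    mellin (fun x => (H a x : ℂ)) s = hurwitzKernelMellinCont a s := by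
  have hP4 := hasMellin_cpow_Ioi (-1) (s := s) (by simp; linarith)
  have h1 := hasMellin_add (mellinConvergent_indicator_Ioc_H ha.le hs0)
    (mellinConvergent_indicator_Ioi_hurwitzKernel ha s)
  have h2 := hasMellin_sub h1.1 hP4.1
  have hsplit : EqOn (fun x => (H a x : ℂ)) (fun t =>
      (Ioc 0 1).indicator (fun x => (H a x : ℂ)) t +
        (Ioi 1).indicator (fun x => (hurwitzKernel a x : ℂ)) t -
        (Ioi 1).indicator (fun x : ℝ => (x : ℂ) ^ (-1 : ℂ)) t) (Ioi 0) := by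
    intro t (ht : 0 < t)
    rcases le_or_gt t 1 with h | h
    · simp [indicator, ht, h, h.not_gt]
    · simp [indicator, h, h.not_ge, H_eq_hurwitzKernel_sub, Complex.cpow_neg_one]
  rw [mellin_congr_Ioi hsplit, h2.2, h1.2, hP4.2, hurwitzKernelMellinCont]
  ring

end HurwitzKernelMellinCont

lemma Gamma_mul_hurwitzZeta_eq_mellin_hurwitzKernel {a : ℝ} (ha : 0 < a) (ha1 : a ≤ 1) {s : ℂ}
    (hs : 1 < s.re) :
    Complex.Gamma s * hurwitzZeta a s = mellin (fun x => (hurwitzKernel a x : ℂ)) s := by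
  have hζ := (hasSum_hurwitzZeta_of_one_lt_re ⟨ha.le, ha1⟩ hs).mul_left (Complex.Gamma s)
  have hM := hasSum_mellin (a := fun _ : ℕ => (1 : ℂ)) (p := fun n => n + a)
    (F := fun x => (hurwitzKernel a x : ℂ)) (fun n => Or.inr (by positivity)) (by linarith)
    (fun t ht => by simpa using (hasSum_hurwitzKernel a ht).mapL Complex.ofRealCLM)
    (((Real.summable_one_div_nat_add_rpow a s.re).2 hs).congr fun n => by
      simp [abs_of_pos (by positivity : (0 : ℝ) < n + a)])
  refine hζ.unique (hM.congr_fun fun n => ?_)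
  push_cast
  ring

lemma eqOn_Gamma_mul_hurwitzZeta_hurwitzKernelMellinCont {a : ℝ} (ha : 0 < a) (ha1 : a ≤ 1) :
    EqOn (fun s => Complex.Gamma s * hurwitzZeta a s) (hurwitzKernelMellinCont a)
      ({s | 0 < s.re ∧ 0 < s.im} ∪ {s | 0 < s.re ∧ s.re < 1}) := by
  -- `U` joins the half-plane `1 < re s` to the critical strip while avoiding the pole `s = 1`
  set U : Set ℂ := {s | 0 < s.re ∧ 0 < s.im} ∪ {s | 0 < s.re ∧ s.re < 1}
  have hU : ∀ s ∈ U, 0 < s.re ∧ s ≠ 1 := by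
    rintro s (⟨h0, h1⟩ | ⟨h0, h1⟩) <;> refine ⟨h0, ?_⟩ <;> rintro rfl <;> simp at h1
  have hUo : IsOpen U :=
    ((isOpen_lt continuous_const Complex.continuous_re).inter
      (isOpen_lt continuous_const Complex.continuous_im)).union
      ((isOpen_lt continuous_const Complex.continuous_re).inter
        (isOpen_lt Complex.continuous_re continuous_const))
  have hUc : IsPreconnected U :=
    IsPreconnected.union ((1 + Complex.I) / 2) (by norm_num) (by norm_num)
      ((convex_halfSpace_re_gt 0).inter (convex_halfSpace_im_gt 0)).isPreconnected
      ((convex_halfSpace_re_gt 0).inter (convex_halfSpace_re_lt 1)).isPreconnected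
  have hf : AnalyticOnNhd ℂ (fun s => Complex.Gamma s * hurwitzZeta a s) U := by
    refine DifferentiableOn.analyticOnNhd
      (fun s hs => DifferentiableAt.differentiableWithinAt ?_) hUo
    refine (Complex.differentiableAt_Gamma s fun m hm => ?_).mul
      (differentiableAt_hurwitzZeta _ (hU s hs).2)
    have := (hU s hs).1
    simp only [hm, Complex.neg_re, Complex.natCast_re] at this
    linarith [m.cast_nonneg (α := ℝ)]
  have hg : AnalyticOnNhd ℂ (hurwitzKernelMellinCont a) U :=
    DifferentiableOn.analyticOnNhd (fun s hs => (differentiableAt_hurwitzKernelMellinCont ha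
      (hU s hs).1 (hU s hs).2).differentiableWithinAt) hUo
  refine hf.eqOn_of_preconnected_of_eventuallyEq hg hUc (z₀ := 2 + Complex.I)
    (Or.inl ⟨by simp, by simp⟩) ?_
  filter_upwards [(isOpen_lt continuous_const Complex.continuous_re).mem_nhds
    (show 1 < (2 + Complex.I).re by norm_num)] with s hs
  rw [Gamma_mul_hurwitzZeta_eq_mellin_hurwitzKernel ha ha1 hs,
    mellin_hurwitzKernel_eq_hurwitzKernelMellinCont ha hs]

lemma Gamma_mul_hurwitzZeta_eq_mellin_H {a : ℝ} (ha : 0 < a) (ha1 : a ≤ 1) {s : ℂ}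
    (hs0 : 0 < s.re) (hs1 : s.re < 1) :
    Complex.Gamma s * hurwitzZeta a s = mellin (fun x => (H a x : ℂ)) s := by
  rw [mellin_H_eq_hurwitzKernelMellinCont ha hs0 hs1]
  exact eqOn_Gamma_mul_hurwitzZeta_hurwitzKernelMellinCont ha ha1 (Or.inr ⟨hs0, hs1⟩)

lemma ofReal_cpow_smul_ofReal {t : ℝ} (ht : 0 < t) (s y : ℝ) :
    (t : ℂ) ^ ((s : ℂ) - 1) • (y : ℂ) = ((t ^ (s - 1) * y : ℝ) : ℂ) := by
  rw [smul_eq_mul, Complex.ofReal_mul, Complex.ofReal_cpow ht.le]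
  push_cast
  ring_nf

lemma mellin_ofReal (f : ℝ → ℝ) (s : ℝ) :
    mellin (fun t => (f t : ℂ)) s = ((∫ t in Ioi 0, t ^ (s - 1) * f t : ℝ) : ℂ) := by
  rw [mellin, ← integral_complex_ofReal]
  exact setIntegral_congr_fun measurableSet_Ioi fun t ht => ofReal_cpow_smul_ofReal ht s (f t)

lemma mellinConvergent_ofReal_iff {f : ℝ → ℝ} {s : ℝ} :
    MellinConvergent (fun t => (f t : ℂ)) s ↔
      IntegrableOn (fun t => t ^ (s - 1) * f t) (Ioi 0) := by
  rw [MellinConvergent, integrableOn_congr_fun (s := Ioi 0)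
    (fun t ht => ofReal_cpow_smul_ofReal ht s (f t)) measurableSet_Ioi]
  exact ⟨fun h => (by simpa using h.re :
    Integrable (fun t => t ^ (s - 1) * f t) (volume.restrict (Ioi 0))), Integrable.ofReal⟩

lemma hasDerivAt_re_mellin_H_comp_mul {a x₀ σ : ℝ} (ha : 0 < a) (hx₀ : 0 < x₀) (hσ : 0 < σ)
    (hσ' : σ < 1) :
    IntegrableOn (fun x => x ^ (σ - 1) * (log (x / x₀) * H a x)) (Ioi 0) ∧
      HasDerivAt (fun t : ℝ => (mellin (fun u => (H a (x₀ * u) : ℂ)) t).re)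
        (x₀ ^ (-σ) * ∫ x in Ioi 0, x ^ (σ - 1) * (log (x / x₀) * H a x)) σ := by
  have hbot : (fun u => (H a (x₀ * u) : ℂ)) =O[𝓝[>] 0] (· ^ (-(0 : ℝ))) :=
    isBigO_nhdsGT_of_norm_le fun t ht => by
      rw [Complex.norm_real, norm_eq_abs]
      exact abs_H_le ha.le (mul_pos hx₀ ht)
  have htop : (fun u => (H a (x₀ * u) : ℂ)) =O[atTop] (· ^ (-(1 : ℝ))) :=
    isBigO_atTop_of_norm_le (C := (1 + a⁻¹) / x₀) fun t ht => by
      rw [Complex.norm_real, norm_eq_abs, div_div]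
      exact abs_H_le_div ha (mul_pos hx₀ ht)
  have hloc : LocallyIntegrableOn (fun u => (H a (x₀ * u) : ℂ)) (Ioi 0) :=
    (Complex.continuous_ofReal.comp_continuousOn ((continuousOn_H a).comp
      (continuousOn_const.mul continuousOn_id) fun t (ht : 0 < t) => mul_pos hx₀ ht)
      ).locallyIntegrableOn measurableSet_Ioi
  obtain ⟨hconv, hderiv⟩ := mellin_hasDerivAt_of_isBigO_rpow (s := σ) hloc htop (by simpa)
    hbot (by simpa)
  have hlog : (fun t => log t • (H a (x₀ * t) : ℂ)) =
      fun t => ((log (x₀ * t / x₀) * H a (x₀ * t) : ℝ) : ℂ) := by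
    funext t
    rw [mul_div_cancel_left₀ _ hx₀.ne', Complex.real_smul, Complex.ofReal_mul]
  rw [hlog] at hconv hderiv
  rw [mellin_comp_mul_left (fun x => ((log (x / x₀) * H a x : ℝ) : ℂ)) _ hx₀, mellin_ofReal,
    smul_eq_mul, ← Complex.ofReal_neg, ← Complex.ofReal_cpow hx₀.le, ← Complex.ofReal_mul]
    at hderiv
  exact ⟨mellinConvergent_ofReal_iff.1 ((MellinConvergent.comp_mul_left hx₀).1 hconv),
    by simpa using hderiv.real_of_complex⟩

lemma re_mellin_H_comp_mul {a x₀ t : ℝ} (ha : 0 < a) (ha1 : a ≤ 1) (hx₀ : 0 < x₀) (ht : 0 < t)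
    (ht' : t < 1) :
    (mellin (fun u => (H a (x₀ * u) : ℂ)) t).re =
      x₀ ^ (-t) * Real.Gamma t * (hurwitzZeta a t).re := by
  rw [mellin_comp_mul_left (fun x => (H a x : ℂ)) _ hx₀,
    ← Gamma_mul_hurwitzZeta_eq_mellin_H ha ha1 (by simpa) (by simpa), smul_eq_mul,
    ← Complex.ofReal_neg, ← Complex.ofReal_cpow hx₀.le,
    Complex.Gamma_ofReal, ← mul_assoc, ← Complex.ofReal_mul, Complex.re_ofReal_mul]

lemma setIntegral_neg_of_nonpos_of_neg {f : ℝ → ℝ} {s t : Set ℝ} (hs : MeasurableSet s)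
    (hf : IntegrableOn f s) (hle : ∀ x ∈ s, f x ≤ 0) (hts : t ⊆ s) (hlt : ∀ x ∈ t, f x < 0)
    (ht : volume t ≠ 0) : ∫ x in s, f x < 0 := by
  have hpos : 0 < ∫ x in s, -f x := by
    rw [setIntegral_pos_iff_support_of_nonneg_ae
      (ae_restrict_of_forall_mem hs fun x hx => neg_nonneg.2 (hle x hx)) hf.neg]
    refine pos_iff_ne_zero.2 fun h0 => ht <| measure_mono_null (fun x hx => ?_) h0
    exact ⟨neg_ne_zero.2 (hlt x hx).ne, hts hx⟩
  rw [integral_neg] at hpos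
  linarith

lemma integral_rpow_mul_log_mul_H_neg {a x₀ σ : ℝ} (hx₀ : 0 < x₀)
    (hpos : ∀ x : ℝ, 0 < x → x < x₀ → 0 < H a x) (hneg : ∀ x : ℝ, x₀ < x → H a x < 0)
    (hint : IntegrableOn (fun x => x ^ (σ - 1) * (log (x / x₀) * H a x)) (Ioi 0)) :
    ∫ x in Ioi 0, x ^ (σ - 1) * (log (x / x₀) * H a x) < 0 := by
  refine setIntegral_neg_of_nonpos_of_neg measurableSet_Ioi hint (fun x (hx : 0 < x) => ?_)
    (Ioo_subset_Ioi_self : Ioo 0 x₀ ⊆ Ioi 0) (fun x hx => ?_) (by simp [hx₀])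
  · refine mul_nonpos_of_nonneg_of_nonpos (rpow_nonneg hx.le _) ?_
    rcases lt_trichotomy x x₀ with h | rfl | h
    · exact mul_nonpos_of_nonpos_of_nonneg
        (log_nonpos (by positivity) ((div_le_one hx₀).2 h.le)) (hpos x hx h).le
    · simp [div_self hx₀.ne']
    · exact mul_nonpos_of_nonneg_of_nonpos (log_nonneg ((one_le_div hx₀).2 h.le)) (hneg x h).le
  · exact mul_neg_of_pos_of_neg (rpow_pos_of_pos hx.1 _) (mul_neg_of_neg_of_pos
      (log_neg (div_pos hx.1 hx₀) ((div_lt_one hx₀).2 hx.2)) (hpos x hx.1 hx.2))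

/-- Let `0 < a < 1/2` and let `x₀ > 0` be such that `H(a,·) > 0` on `(0,x₀)` and `H(a,·) < 0` on
`(x₀,∞)`. Then for every `σ ∈ (0,1)` the function `F(σ) = x₀^{-σ} Γ(σ) ζ(σ,a)` has derivative
`F'(σ) = ∫₀^∞ H(a,x) (x/x₀)^σ log(x/x₀) dx/x`, which is negative. -/
theorem hasDerivAt_rpow_Gamma_mul_hurwitzZeta (a x₀ : ℝ) (ha : 0 < a) (ha' : a < 1 / 2)
    (hx₀ : 0 < x₀) (hpos : ∀ x : ℝ, 0 < x → x < x₀ → 0 < H a x)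
    (hneg : ∀ x : ℝ, x₀ < x → H a x < 0) (σ : ℝ) (hσ : 0 < σ) (hσ' : σ < 1) :
    HasDerivAt
      (fun σ : ℝ => x₀ ^ (-σ) * Real.Gamma σ * (hurwitzZeta (a : UnitAddCircle) (σ : ℂ)).re)
      (∫ x in Set.Ioi (0 : ℝ), H a x * (x / x₀) ^ σ * Real.log (x / x₀) / x) σ ∧
    (∫ x in Set.Ioi (0 : ℝ), H a x * (x / x₀) ^ σ * Real.log (x / x₀) / x) < 0 := by
  obtain ⟨hint, hderiv⟩ := hasDerivAt_re_mellin_H_comp_mul ha hx₀ hσ hσ'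
  have hintegrand : EqOn (fun x => H a x * (x / x₀) ^ σ * log (x / x₀) / x)
      (fun x => x₀ ^ (-σ) * (x ^ (σ - 1) * (log (x / x₀) * H a x))) (Ioi 0) :=
    fun x (hx : 0 < x) => by
      dsimp only
      rw [div_rpow hx.le hx₀.le, rpow_neg hx₀.le, rpow_sub_one hx.ne']
      field_simp
  rw [setIntegral_congr_fun measurableSet_Ioi hintegrand, integral_const_mul]
  refine ⟨hderiv.congr_of_eventuallyEq ?_, mul_neg_of_pos_of_neg (rpow_pos_of_pos hx₀ _)
    (integral_rpow_mul_log_mul_H_neg hx₀ hpos hneg hint)⟩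
  filter_upwards [Ioo_mem_nhds hσ hσ'] with t ht
  exact (re_mellin_H_comp_mul ha (by linarith) hx₀ ht.1 ht.2).symm
end

section
/- Fix a real number $\sigma$ with $0 < \sigma < 1$. Then the function $a \mapsto \zeta(\sigma, a)$ is strictly decreasing on $(0,1)$, and for every $a \in (0,1)$ its derivative with respect to $a$ equals $-\frac{1}{\Gamma(\sigma)} \int_0^{\infty} \frac{e^{(1-a)x}}{e^x - 1}\, x^{\sigma}\, dx < 0$. -/
open HurwitzZeta Set MeasureTheory Real

/-!
The difference `ζ(s, a) - ζ(s)` is entire, and for `Re s > 0` it is still the sum of the series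
`∑ₙ ((n + a)^(-s) - (n + 1)^(-s))`: by the mean value theorem its terms are `O(n^(-Re s - 1))`
locally uniformly in `s`, so the series is holomorphic there, and the identity theorem carries
over the Dirichlet series identity from `Re s > 1`. For real `σ > 0` the series can be
differentiated termwise in `a`, giving `∂ₐ ζ(σ, a) = -σ ∑ₙ (n + a)^(-σ-1) < 0`. Expanding
`e^((1-a)x) / (e^x - 1) = ∑ₙ e^(-(n+a)x)` and integrating termwise against `x^σ` turns this
sum into `Γ(σ + 1)⁻¹ ∫₀^∞ e^((1-a)x) / (e^x - 1) x^σ dx`, and `Γ(σ + 1) = σ Γ(σ)`.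
-/

lemma norm_ofReal_cpow_neg_sub_le_s15 {x y : ℝ} (hx : 0 < x) (hxy : x ≤ y) {s : ℂ}
    (hs : -1 ≤ s.re) :
    ‖(x : ℂ) ^ (-s) - (y : ℂ) ^ (-s)‖ ≤ ‖s‖ * x ^ (-s.re - 1) * (y - x) := by
  rcases eq_or_ne s 0 with rfl | hs0
  · simp
  have hderiv : ∀ t ∈ Icc x y,
      HasDerivWithinAt (fun t : ℝ => (t : ℂ) ^ (-s)) (-s * (t : ℂ) ^ (-s - 1)) (Icc x y) t :=
    fun t ht => (hasDerivAt_ofReal_cpow_const (hx.trans_le ht.1).ne' (neg_ne_zero.2 hs0))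
      |>.hasDerivWithinAt
  have hbound : ∀ t ∈ Ico x y, ‖-s * (t : ℂ) ^ (-s - 1)‖ ≤ ‖s‖ * x ^ (-s.re - 1) := by
    intro t ht
    rw [norm_mul, norm_neg, Complex.norm_cpow_eq_rpow_re_of_pos (hx.trans_le ht.1)]
    gcongr
    simpa using rpow_le_rpow_of_nonpos hx ht.1 (by linarith)
  rw [norm_sub_rev]
  exact norm_image_sub_le_of_norm_deriv_le_segment' hderiv hbound y ⟨hxy, le_rfl⟩

lemma rpow_le_rpow_add_rpow {x p q r : ℝ} (hx : 0 < x) (hqp : q ≤ p) (hpr : p ≤ r) :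
    x ^ p ≤ x ^ q + x ^ r := by
  rcases le_total x 1 with h | h
  · exact (rpow_le_rpow_of_exponent_ge hx h hqp).trans
      (le_add_of_nonneg_right (rpow_nonneg hx.le r))
  · exact (rpow_le_rpow_of_exponent_le h hpr).trans
      (le_add_of_nonneg_left (rpow_nonneg hx.le q))

lemma summable_nat_add_rpow_neg_sub_one {a p : ℝ} (ha : 0 < a) (hp : 0 < p) :
    Summable fun n : ℕ => ((n : ℝ) + a) ^ (-p - 1) := by
  refine ((Real.summable_one_div_nat_add_rpow a (p + 1)).2 (by linarith)).congr fun n => ?_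
  rw [abs_of_pos (by positivity), one_div, ← rpow_neg (by positivity), neg_add']

lemma norm_natCast_add_cpow_neg_sub_le {a : ℝ} (ha : a ∈ Ioc 0 1) (n : ℕ) {s : ℂ} {δ R : ℝ}
    (hδ : -1 ≤ δ) (hδs : δ ≤ s.re) (hsR : ‖s‖ ≤ R) :
    ‖((n : ℂ) + a) ^ (-s) - ((n : ℂ) + 1) ^ (-s)‖ ≤
      R * (((n : ℝ) + a) ^ (-R - 1) + ((n : ℝ) + a) ^ (-δ - 1)) := by
  have hna : 0 < (n : ℝ) + a := by linarith [ha.1, n.cast_nonneg (α := ℝ)]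
  have hmvt := norm_ofReal_cpow_neg_sub_le_s15 hna (by linarith [ha.2] : (n : ℝ) + a ≤ n + 1)
    (hδ.trans hδs)
  push_cast at hmvt
  -- `n + a` may lie on either side of `1`, so it takes both extreme exponents to bound this
  have hexp : ((n : ℝ) + a) ^ (-s.re - 1) ≤ ((n : ℝ) + a) ^ (-R - 1) + ((n : ℝ) + a) ^ (-δ - 1) :=
    rpow_le_rpow_add_rpow hna (by linarith [(Complex.re_le_norm s).trans hsR]) (by linarith)
  calc _ ≤ ‖s‖ * ((n : ℝ) + a) ^ (-s.re - 1) * (n + 1 - (n + a)) := hmvt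
    _ ≤ R * (((n : ℝ) + a) ^ (-R - 1) + ((n : ℝ) + a) ^ (-δ - 1)) * 1 := by
      have hR : 0 ≤ R := (norm_nonneg s).trans hsR
      gcongr
      all_goals linarith [ha.1, ha.2]
    _ = _ := mul_one _

lemma summable_natCast_add_cpow_neg_sub {a : ℝ} (ha : a ∈ Ioc 0 1) {s : ℂ} (hs : 0 < s.re) :
    Summable fun n : ℕ => ((n : ℂ) + a) ^ (-s) - ((n : ℂ) + 1) ^ (-s) :=
  .of_norm_bounded (((summable_nat_add_rpow_neg_sub_one ha.1
      (hs.trans_le (Complex.re_le_norm s))).add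
        (summable_nat_add_rpow_neg_sub_one ha.1 hs)).mul_left ‖s‖)
    fun n => norm_natCast_add_cpow_neg_sub_le ha n (by linarith) le_rfl le_rfl

lemma differentiableOn_tsum_natCast_add_cpow_neg_sub {a : ℝ} (ha : a ∈ Ioc 0 1) {δ : ℝ}
    (hδ : 0 < δ) {R : ℝ} (hR : 0 < R) :
    DifferentiableOn ℂ (fun s : ℂ => ∑' n : ℕ, (((n : ℂ) + a) ^ (-s) - ((n : ℂ) + 1) ^ (-s)))
      ({s | δ < s.re} ∩ Metric.ball 0 R) := by
  refine Complex.differentiableOn_tsum_of_summable_norm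
    (((summable_nat_add_rpow_neg_sub_one ha.1 hR).add
      (summable_nat_add_rpow_neg_sub_one ha.1 hδ)).mul_left R) (fun n => ?_)
    ((isOpen_lt continuous_const Complex.continuous_re).inter Metric.isOpen_ball)
    fun n s hs => norm_natCast_add_cpow_neg_sub_le ha n (by linarith) hs.1.le
      (mem_ball_zero_iff.1 hs.2).le
  have hbase : ∀ b : ℝ, 0 < b → ((n : ℂ) + b) ≠ 0 := fun b hb => by
    exact_mod_cast (by positivity : (n : ℝ) + b ≠ 0)
  exact (differentiable_neg.const_cpow (Or.inl (hbase a ha.1))).differentiableOn.sub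
    (by simpa using (differentiable_neg.const_cpow (Or.inl (hbase 1 one_pos))).differentiableOn)

lemma hasSum_hurwitzZeta_sub_riemannZeta_of_one_lt_re {a : ℝ} (ha : a ∈ Ioc 0 1) {s : ℂ}
    (hs : 1 < s.re) :
    HasSum (fun n : ℕ => ((n : ℂ) + a) ^ (-s) - ((n : ℂ) + 1) ^ (-s))
      (hurwitzZeta a s - riemannZeta s) := by
  have hterm : ∀ z : ℂ, 1 / z ^ s = z ^ (-s) := fun z => by rw [Complex.cpow_neg, one_div]
  have h1 := hasSum_hurwitzZeta_of_one_lt_re (a := 1) ⟨zero_le_one, le_rfl⟩ hs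
  rw [AddCircle.coe_period, hurwitzZeta_zero] at h1
  simpa only [hterm, Complex.ofReal_one] using
    (hasSum_hurwitzZeta_of_one_lt_re ⟨ha.1.le, ha.2⟩ hs).sub h1

theorem hasSum_hurwitzZeta_sub_riemannZeta {a : ℝ} (ha : a ∈ Ioc 0 1) {s : ℂ}
    (hs : 0 < s.re) :
    HasSum (fun n : ℕ => ((n : ℂ) + a) ^ (-s) - ((n : ℂ) + 1) ^ (-s))
      (hurwitzZeta a s - riemannZeta s) := by
  set U : Set ℂ := {w | s.re / 2 < w.re} ∩ Metric.ball 0 (‖s‖ + 3)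
  have hopen : IsOpen U :=
    (isOpen_lt continuous_const Complex.continuous_re).inter Metric.isOpen_ball
  have hζ : DifferentiableOn ℂ (fun w => hurwitzZeta a w - riemannZeta w) U := by
    rw [← hurwitzZeta_zero]
    exact (differentiable_hurwitzZeta_sub_hurwitzZeta _ _).differentiableOn
  have hs2 : s + 2 ∈ U := by
    refine ⟨show s.re / 2 < (s + 2).re by simp; linarith, ?_⟩
    rw [mem_ball_zero_iff]
    exact (norm_add_le _ _).trans_lt (by norm_num)
  have heq := ((differentiableOn_tsum_natCast_add_cpow_neg_sub ha (half_pos hs)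
    (by positivity)).analyticOnNhd hopen).eqOn_of_preconnected_of_eventuallyEq
    (hζ.analyticOnNhd hopen)
    ((convex_halfSpace_re_gt _).inter (convex_ball _ _)).isPreconnected hs2 (by
      filter_upwards [(isOpen_lt continuous_const Complex.continuous_re).mem_nhds
        (show 1 < (s + 2).re by simp; linarith)] with w hw
      exact (hasSum_hurwitzZeta_sub_riemannZeta_of_one_lt_re ha hw).tsum_eq)
  convert (summable_natCast_add_cpow_neg_sub ha hs).hasSum using 1
  exact (heq ⟨show s.re / 2 < s.re by linarith, by simp⟩).symm

lemma hasSum_re_hurwitzZeta_sub_riemannZeta {a σ : ℝ} (ha : a ∈ Ioc 0 1) (hσ : 0 < σ) :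
    HasSum (fun n : ℕ => ((n : ℝ) + a) ^ (-σ) - ((n : ℝ) + 1) ^ (-σ))
      (hurwitzZeta a σ - riemannZeta σ).re := by
  have hre : ∀ b : ℝ, 0 < b → ∀ n : ℕ, (((n : ℂ) + b) ^ (-(σ : ℂ))).re = ((n : ℝ) + b) ^ (-σ) :=
    fun b hb n => by
      rw [← Complex.ofReal_natCast, ← Complex.ofReal_add, ← Complex.ofReal_neg,
        ← Complex.ofReal_cpow (by positivity), Complex.ofReal_re]
  have hre1 : ∀ n : ℕ, (((n : ℂ) + 1) ^ (-(σ : ℂ))).re = ((n : ℝ) + 1) ^ (-σ) := by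
    simpa using hre 1 one_pos
  simpa only [Complex.sub_re, hre a ha.1, hre1] using
    Complex.hasSum_re (hasSum_hurwitzZeta_sub_riemannZeta ha (s := σ) (by simpa using hσ))

theorem hasDerivAt_hurwitzZeta_re {σ a : ℝ} (hσ : 0 < σ) (ha : a ∈ Ioo 0 1) :
    HasDerivAt (fun y : ℝ => (hurwitzZeta y σ).re) (-σ * ∑' n : ℕ, ((n : ℝ) + a) ^ (-σ - 1)) a := by
  have ha2 : 0 < a / 2 := half_pos ha.1
  have hpos : ∀ n : ℕ, ∀ y ∈ Ioi (a / 2), 0 < (n : ℝ) + y := fun n y hy => by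
    have : 0 < y := ha2.trans hy
    positivity
  have hterm : ∀ (n : ℕ), ∀ y ∈ Ioi (a / 2), HasDerivAt
      (fun y => ((n : ℝ) + y) ^ (-σ) - ((n : ℝ) + 1) ^ (-σ)) (-σ * ((n : ℝ) + y) ^ (-σ - 1)) y :=
    fun n y hy => by
      simpa using ((hasDerivAt_rpow_const (p := -σ) (Or.inl (hpos n y hy).ne')).comp y
        ((hasDerivAt_id y).const_add (n : ℝ))).sub_const (((n : ℝ) + 1) ^ (-σ))
  have hbound : ∀ (n : ℕ), ∀ y ∈ Ioi (a / 2),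
      ‖-σ * ((n : ℝ) + y) ^ (-σ - 1)‖ ≤ σ * ((n : ℝ) + a / 2) ^ (-σ - 1) := fun n y hy => by
    rw [norm_mul, norm_neg, Real.norm_of_nonneg hσ.le,
      Real.norm_of_nonneg (rpow_nonneg (hpos n y hy).le _)]
    refine mul_le_mul_of_nonneg_left ?_ hσ.le
    exact rpow_le_rpow_of_nonpos (by positivity) (by linarith [hy.out]) (by linarith)
  have hsum : ∀ y ∈ Ioo (0 : ℝ) 1, _ := fun y hy =>
    hasSum_re_hurwitzZeta_sub_riemannZeta ⟨hy.1, hy.2.le⟩ hσ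
  have hG := hasDerivAt_tsum_of_isPreconnected
    ((summable_nat_add_rpow_neg_sub_one ha2 hσ).mul_left σ) isOpen_Ioi
    isPreconnected_Ioi hterm hbound (half_lt_self ha.1) (hsum a ha).summable (half_lt_self ha.1)
  rw [tsum_mul_left] at hG
  refine (hG.const_add (riemannZeta σ).re).congr_of_eventuallyEq ?_
  filter_upwards [Ioo_mem_nhds ha.1 ha.2] with y hy
  rw [(hsum y hy).tsum_eq, Complex.sub_re]
  ring

lemma hasSum_rpow_mul_exp_neg_nat_add_mul {a x : ℝ} (hx : 0 < x) (σ : ℝ) :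
    HasSum (fun n : ℕ => x ^ σ * exp (-(((n : ℝ) + a) * x)))
      (exp ((1 - a) * x) / (exp x - 1) * x ^ σ) := by
  have hq : exp (-x) < 1 := exp_lt_one_iff.2 (neg_lt_zero.2 hx)
  have hterm : ∀ n : ℕ, x ^ σ * exp (-(((n : ℝ) + a) * x))
      = x ^ σ * exp (-(a * x)) * exp (-x) ^ n := fun n => by
    rw [← exp_nat_mul, mul_assoc, ← exp_add]
    ring_nf
  have hsum : exp ((1 - a) * x) / (exp x - 1) * x ^ σ
      = x ^ σ * exp (-(a * x)) * (1 - exp (-x))⁻¹ := by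
    have h1 : exp x - 1 ≠ 0 := (sub_pos.2 (one_lt_exp_iff.2 hx)).ne'
    have h2 : 1 - exp (-x) ≠ 0 := (sub_pos.2 hq).ne'
    rw [show (1 - a) * x = -(a * x) + x by ring, exp_add]
    rw [exp_neg x] at h2 ⊢
    field_simp
  simpa only [hterm, hsum] using
    (hasSum_geometric_of_lt_one (exp_nonneg _) hq).mul_left (x ^ σ * exp (-(a * x)))

theorem integral_exp_div_exp_sub_one_mul_rpow {σ a : ℝ} (hσ : 0 < σ) (ha : 0 < a) :
    ∫ x in Ioi (0 : ℝ), exp ((1 - a) * x) / (exp x - 1) * x ^ σ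
      = Gamma (σ + 1) * ∑' n : ℕ, ((n : ℝ) + a) ^ (-σ - 1) := by
  have hna : ∀ n : ℕ, 0 < (n : ℝ) + a := fun n => by positivity
  have hterm : ∀ n : ℕ, ∫ x in Ioi (0 : ℝ), x ^ σ * exp (-(((n : ℝ) + a) * x))
      = Gamma (σ + 1) * ((n : ℝ) + a) ^ (-σ - 1) := fun n => by
    have := integral_rpow_mul_exp_neg_mul_Ioi (by linarith : 0 < σ + 1) (hna n)
    rw [add_sub_cancel_right] at this
    rw [this, one_div, inv_rpow (hna n).le, ← rpow_neg (hna n).le, neg_add', mul_comm]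
  have hint : ∀ n : ℕ, IntegrableOn (fun x => x ^ σ * exp (-(((n : ℝ) + a) * x))) (Ioi 0) :=
    fun n => Integrable.of_integral_ne_zero <| by
      rw [hterm n]
      exact (mul_pos (Gamma_pos_of_pos (by linarith)) (rpow_pos_of_pos (hna n) _)).ne'
  have hnorm : ∀ n : ℕ, ∫ x in Ioi (0 : ℝ), ‖x ^ σ * exp (-(((n : ℝ) + a) * x))‖
      = Gamma (σ + 1) * ((n : ℝ) + a) ^ (-σ - 1) := fun n => by
    rw [← hterm n]
    refine setIntegral_congr_fun measurableSet_Ioi fun x hx => ?_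
    exact Real.norm_of_nonneg (mul_nonneg (rpow_nonneg (le_of_lt hx) _) (exp_nonneg _))
  have hswap := hasSum_integral_of_summable_integral_norm hint
    (by simpa only [hnorm] using (summable_nat_add_rpow_neg_sub_one ha hσ).mul_left _)
  simp only [hterm] at hswap
  rw [← tsum_mul_left, hswap.tsum_eq]
  refine setIntegral_congr_fun measurableSet_Ioi fun x hx => ?_
  exact (hasSum_rpow_mul_exp_neg_nat_add_mul hx σ).tsum_eq.symm

lemma tsum_nat_add_rpow_neg_sub_one_pos {a p : ℝ} (ha : 0 < a) (hp : 0 < p) :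
    0 < ∑' n : ℕ, ((n : ℝ) + a) ^ (-p - 1) :=
  (summable_nat_add_rpow_neg_sub_one ha hp).tsum_pos
    (fun n => rpow_nonneg (by linarith [n.cast_nonneg (α := ℝ)]) _) 0
    (by simpa using rpow_pos_of_pos ha _)

lemma neg_one_div_Gamma_mul_integral_eq {σ a : ℝ} (hσ : 0 < σ) (ha : 0 < a) :
    -(1 / Gamma σ) *
        ∫ x in Ioi (0 : ℝ), exp ((1 - a) * x) / (exp x - 1) * x ^ σ
      = -σ * ∑' n : ℕ, ((n : ℝ) + a) ^ (-σ - 1) := by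
  rw [integral_exp_div_exp_sub_one_mul_rpow hσ ha, Gamma_add_one hσ.ne']
  field_simp [(Gamma_pos_of_pos hσ).ne']

theorem hurwitzZeta_strictAntiOn_and_hasDerivAt_general (σ : ℝ) (hσ : 0 < σ) :
    StrictAntiOn (fun a : ℝ => (hurwitzZeta (a : UnitAddCircle) (σ : ℂ)).re)
      (Set.Ioo (0 : ℝ) 1) ∧
    ∀ a ∈ Set.Ioo (0 : ℝ) 1,
      HasDerivAt (fun a : ℝ => (hurwitzZeta (a : UnitAddCircle) (σ : ℂ)).re)
        (-(1 / Real.Gamma σ) *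
          ∫ x in Set.Ioi (0 : ℝ), Real.exp ((1 - a) * x) / (Real.exp x - 1) * x ^ σ) a ∧
      (-(1 / Real.Gamma σ) *
          ∫ x in Set.Ioi (0 : ℝ), Real.exp ((1 - a) * x) / (Real.exp x - 1) * x ^ σ) < 0 := by
  have hneg : ∀ a ∈ Ioo (0 : ℝ) 1, -σ * ∑' n : ℕ, ((n : ℝ) + a) ^ (-σ - 1) < 0 := fun a ha =>
    mul_neg_of_neg_of_pos (neg_neg_of_pos hσ) (tsum_nat_add_rpow_neg_sub_one_pos ha.1 hσ)
  refine ⟨strictAntiOn_of_deriv_neg (convex_Ioo 0 1)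
    (fun a ha => (hasDerivAt_hurwitzZeta_re hσ ha).continuousAt.continuousWithinAt)
    fun a ha => ?_, fun a ha => ?_⟩
  · rw [interior_Ioo] at ha
    rw [(hasDerivAt_hurwitzZeta_re hσ ha).deriv]
    exact hneg a ha
  · rw [neg_one_div_Gamma_mul_integral_eq hσ ha.1]
    exact ⟨hasDerivAt_hurwitzZeta_re hσ ha, hneg a ha⟩

/-- For fixed `σ ∈ (0,1)`, the function `a ↦ ζ(σ,a)` is strictly decreasing on `(0,1)`, and for
every `a ∈ (0,1)` its derivative with respect to `a` equals
`-(1/Γ(σ)) ∫₀^∞ e^{(1-a)x}/(e^x - 1) x^σ dx`, which is negative. -/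
theorem hurwitzZeta_strictAntiOn_and_hasDerivAt (σ : ℝ) (hσ : 0 < σ) (hσ' : σ < 1) :
    StrictAntiOn (fun a : ℝ => (hurwitzZeta (a : UnitAddCircle) (σ : ℂ)).re)
      (Set.Ioo (0 : ℝ) 1) ∧
    ∀ a ∈ Set.Ioo (0 : ℝ) 1,
      HasDerivAt (fun a : ℝ => (hurwitzZeta (a : UnitAddCircle) (σ : ℂ)).re)
        (-(1 / Real.Gamma σ) *
          ∫ x in Set.Ioi (0 : ℝ), Real.exp ((1 - a) * x) / (Real.exp x - 1) * x ^ σ) a ∧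
      (-(1 / Real.Gamma σ) *
          ∫ x in Set.Ioi (0 : ℝ), Real.exp ((1 - a) * x) / (Real.exp x - 1) * x ^ σ) < 0 :=
  hurwitzZeta_strictAntiOn_and_hasDerivAt_general σ hσ
end
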